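/- The weighting functor applied to M_t(λ, α) yields the intermediate-series module A_t(α − 1): explicitly, setting w_n = image of 1 and v_n = image of ∂·1 in M_t(λ,α)/ker(μ_{-n})M_t(λ,α), and rescaling ŵ_n = λ^n w_{−n}, v̂_n = λ^n v_{−n}, the 𝒯-action becomes L_m ŵ_n = (−n + m(α−1))ŵ_{n+m}, L_m v̂_n = (−n + m(α−1/2))v̂_{n+m}, I_r ŵ_n = −2t^{2r}α ŵ_{n+r}, I_r v̂_n = (1−2α)t^{2r} v̂_{n+r}, G_p ŵ_n = t^{2p} v̂_{n+p}, G_p v̂_n = (−t)^{2p}(−n + (2α−1)p)ŵ_{n+p}; hence W(M_t(λ, α)) ≅ A_t(α − 1) as 𝒯-modules. -/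

import Mathlib

open Polynomial

/- `M_t(λ,α) = ℂ[∂²] ⊕ ∂ℂ[∂²]` is encoded as pairs of polynomials; `λ = ν²`;
half-integer indices are doubled.  The weighting functor `𝒲` (Nilsson) for the
Cartan subalgebra `ℂL₀`: `𝒲(M) = ⊕_c M/ker(μ_c)M`, where the class of `(f,g)` in
`M/ker(μ_c)M` is `(f(c), g(c))` (evaluation at `L₀ = c`), and an operator of
ad-`L₀`-eigenvalue `−d` maps the component at `c` to the component at `c − d`.
Components are supported on `c ∈ (1/2)ℤ`, encoded by doubled indices, so
`𝒲(M) = (ℤ →₀ ℂ) × (ℤ →₀ ℂ)` with component `k` the class in `M/ker(μ_{k/2})M`. -/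

noncomputable def MLop (nu α : ℂ) (m : ℤ) (v : Polynomial ℂ × Polynomial ℂ) :
    Polynomial ℂ × Polynomial ℂ :=
  (nu ^ (2 * m) • ((X + C ((m : ℂ) * α)) * v.1.comp (X + C (m : ℂ))),
   nu ^ (2 * m) • ((X + C ((m : ℂ) * (α + 1/2))) * v.2.comp (X + C (m : ℂ))))

noncomputable def MIop (t nu α : ℂ) (a : ℤ) (v : Polynomial ℂ × Polynomial ℂ) :
    Polynomial ℂ × Polynomial ℂ :=
  ((-2 * t ^ a * nu ^ a * α) • v.1.comp (X + C ((a : ℂ) / 2)),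
   (t ^ a * nu ^ a * (1 - 2 * α)) • v.2.comp (X + C ((a : ℂ) / 2)))

noncomputable def MGop (t nu α : ℂ) (a : ℤ) (v : Polynomial ℂ × Polynomial ℂ) :
    Polynomial ℂ × Polynomial ℂ :=
  (((-t) ^ a * nu ^ a) • ((X + C ((a : ℂ) * α)) * v.2.comp (X + C ((a : ℂ) / 2))),
   (t ^ a * nu ^ a) • v.1.comp (X + C ((a : ℂ) / 2)))

/-- The action of `L_m` on `𝒲(M_t(λ,α))` induced by the weighting functor:
`L_m` has ad-`L₀`-eigenvalue `−m`, so it maps the class at weight `k/2` of a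
representative to the class at weight `k/2 − m` of `L_m` of that representative. -/
noncomputable def WLop (nu α : ℂ) (m : ℤ) (w : (ℤ →₀ ℂ) × (ℤ →₀ ℂ)) :
    (ℤ →₀ ℂ) × (ℤ →₀ ℂ) :=
  (w.1.sum fun k c => Finsupp.single (k - 2 * m)
      ((MLop nu α m (C c, 0)).1.eval (((k - 2 * m : ℤ) : ℂ) / 2)),
   w.2.sum fun k c => Finsupp.single (k - 2 * m)
      ((MLop nu α m (0, C c)).2.eval (((k - 2 * m : ℤ) : ℂ) / 2)))

/-- The induced action of `I_r` (`r = a/2`, ad-eigenvalue `−r`) on `𝒲(M_t(λ,α))`. -/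
noncomputable def WIop (t nu α : ℂ) (a : ℤ) (w : (ℤ →₀ ℂ) × (ℤ →₀ ℂ)) :
    (ℤ →₀ ℂ) × (ℤ →₀ ℂ) :=
  (w.1.sum fun k c => Finsupp.single (k - a)
      ((MIop t nu α a (C c, 0)).1.eval (((k - a : ℤ) : ℂ) / 2)),
   w.2.sum fun k c => Finsupp.single (k - a)
      ((MIop t nu α a (0, C c)).2.eval (((k - a : ℤ) : ℂ) / 2)))

/-- The induced action of `G_p` (`p = a/2`, ad-eigenvalue `−p`) on `𝒲(M_t(λ,α))`. -/
noncomputable def WGop (t nu α : ℂ) (a : ℤ) (w : (ℤ →₀ ℂ) × (ℤ →₀ ℂ)) :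
    (ℤ →₀ ℂ) × (ℤ →₀ ℂ) :=
  (w.2.sum fun k c => Finsupp.single (k - a)
      ((MGop t nu α a (0, C c)).1.eval (((k - a : ℤ) : ℂ) / 2)),
   w.1.sum fun k c => Finsupp.single (k - a)
      ((MGop t nu α a (C c, 0)).2.eval (((k - a : ℤ) : ℂ) / 2)))

/- The intermediate series module `A_t(σ)`, with doubled indices. -/
noncomputable def ALop (σ : ℂ) (m : ℤ) (w : (ℤ →₀ ℂ) × (ℤ →₀ ℂ)) :
    (ℤ →₀ ℂ) × (ℤ →₀ ℂ) :=
  (w.1.sum fun k c => Finsupp.single (k + 2 * m) ((-(k : ℂ) / 2 + σ * m) * c),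
   w.2.sum fun k c => Finsupp.single (k + 2 * m) ((-(k : ℂ) / 2 + (σ + 1/2) * m) * c))

noncomputable def AIop (t σ : ℂ) (a : ℤ) (w : (ℤ →₀ ℂ) × (ℤ →₀ ℂ)) :
    (ℤ →₀ ℂ) × (ℤ →₀ ℂ) :=
  (w.1.sum fun k c => Finsupp.single (k + a) ((-2 * t ^ a * (σ + 1)) * c),
   w.2.sum fun k c => Finsupp.single (k + a) ((-(t ^ a) * (2 * σ + 1)) * c))

noncomputable def AGop (t σ : ℂ) (a : ℤ) (w : (ℤ →₀ ℂ) × (ℤ →₀ ℂ)) :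
    (ℤ →₀ ℂ) × (ℤ →₀ ℂ) :=
  (w.2.sum fun k c =>
      Finsupp.single (k + a) (((-t) ^ a * (-(k : ℂ) / 2 + (2 * σ + 1) * ((a : ℂ) / 2))) * c),
   w.1.sum fun k c => Finsupp.single (k + a) (t ^ a * c))

/-- The rescaling map `x̂_j ↦ ν^j · (class of 1 at weight −j/2)`,
`ŷ_j ↦ ν^j · (class of ∂·1 at weight −j/2)` (i.e. `ŵ_n = λ^n w_{−n}`,
`v̂_n = λ^n v_{−n}`), from `A_t(α−1)` to `𝒲(M_t(λ,α))`. -/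
noncomputable def Phi (nu : ℂ) (w : (ℤ →₀ ℂ) × (ℤ →₀ ℂ)) :
    (ℤ →₀ ℂ) × (ℤ →₀ ℂ) :=
  (w.1.sum fun j c => Finsupp.single (-j) (nu ^ j * c),
   w.2.sum fun j c => Finsupp.single (-j) (nu ^ j * c))

/-! Every operator in sight, on either side, acts on each of the two components by
`x_k ↦ q(k) x_{s(k)}`: on `𝒲(M_t(λ,α))` the scalar `q(k)` is the polynomial coefficient of the
operator evaluated at the target weight. Such weighted shifts compose by composing the shifts
and multiplying the scalars, so each intertwining identity reduces to an identity of scalars, in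
which the rescaling by `ν^j` is absorbed by `ν^j ν^{2m} = ν^{j+2m}`. The same rule shows that
`Phi` is an involution, since `ν^{-j} ν^j = 1`. -/

section WeightedMapDomain

variable {ι κ μ R : Type*} [Semiring R]

noncomputable def weightedMapDomain (s : ι → κ) (q : ι → R) (w : ι →₀ R) : κ →₀ R :=
  w.sum fun i c => Finsupp.single (s i) (q i * c)

theorem weightedMapDomain_weightedMapDomain (s₁ : ι → κ) (q₁ : ι → R) (s₂ : κ → μ)
    (q₂ : κ → R) (w : ι →₀ R) :
    weightedMapDomain s₂ q₂ (weightedMapDomain s₁ q₁ w)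
      = weightedMapDomain (s₂ ∘ s₁) (fun i => q₂ (s₁ i) * q₁ i) w := by
  unfold weightedMapDomain
  rw [Finsupp.sum_sum_index (fun _ => by rw [mul_zero, Finsupp.single_zero])
    (fun _ _ _ => by rw [mul_add, Finsupp.single_add])]
  exact Finsupp.sum_congr fun i _ => by
    rw [Finsupp.sum_single_index (by rw [mul_zero, Finsupp.single_zero]), mul_assoc]
    rfl

theorem weightedMapDomain_congr {s s' : ι → κ} {q q' : ι → R} (hs : ∀ i, s i = s' i)
    (hq : ∀ i, q i = q' i) (w : ι →₀ R) :
    weightedMapDomain s q w = weightedMapDomain s' q' w := by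
  rw [funext hs, funext hq]

theorem weightedMapDomain_id_one (w : ι →₀ R) :
    weightedMapDomain id (fun _ => 1) w = w := by
  simp [weightedMapDomain]

theorem weightedMapDomain_comm {ι' : Type*} {s₁ : ι → κ} {q₁ : ι → R} {s₂ : κ → μ}
    {q₂ : κ → R} {t₁ : ι → ι'} {r₁ : ι → R} {t₂ : ι' → μ} {r₂ : ι' → R}
    (hs : ∀ i, s₂ (s₁ i) = t₂ (t₁ i)) (hq : ∀ i, q₂ (s₁ i) * q₁ i = r₂ (t₁ i) * r₁ i)
    (w : ι →₀ R) :
    weightedMapDomain s₂ q₂ (weightedMapDomain s₁ q₁ w)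
      = weightedMapDomain t₂ r₂ (weightedMapDomain t₁ r₁ w) := by
  simp only [weightedMapDomain_weightedMapDomain]
  exact weightedMapDomain_congr hs hq w

end WeightedMapDomain

section WeightedShifts

variable (t nu α σ : ℂ) (m a : ℤ) (c z : ℂ) (w : (ℤ →₀ ℂ) × (ℤ →₀ ℂ))

theorem MLop_fst_eval : (MLop nu α m (C c, 0)).1.eval z = nu ^ (2 * m) * (z + m * α) * c := by
  simp [MLop, mul_assoc]

theorem MLop_snd_eval :
    (MLop nu α m (0, C c)).2.eval z = nu ^ (2 * m) * (z + m * (α + 1 / 2)) * c := by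
  simp [MLop, mul_assoc]

theorem MIop_fst_eval : (MIop t nu α a (C c, 0)).1.eval z = -2 * t ^ a * nu ^ a * α * c := by
  simp [MIop]

theorem MIop_snd_eval :
    (MIop t nu α a (0, C c)).2.eval z = t ^ a * nu ^ a * (1 - 2 * α) * c := by
  simp [MIop]

theorem MGop_fst_eval :
    (MGop t nu α a (0, C c)).1.eval z = (-t) ^ a * nu ^ a * (z + a * α) * c := by
  simp [MGop, mul_assoc]

theorem MGop_snd_eval : (MGop t nu α a (C c, 0)).2.eval z = t ^ a * nu ^ a * c := by
  simp [MGop, mul_assoc]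

theorem WLop_eq : WLop nu α m w =
    (weightedMapDomain (· - 2 * m)
       (fun k => nu ^ (2 * m) * (((k - 2 * m : ℤ) : ℂ) / 2 + m * α)) w.1,
     weightedMapDomain (· - 2 * m)
       (fun k => nu ^ (2 * m) * (((k - 2 * m : ℤ) : ℂ) / 2 + m * (α + 1 / 2))) w.2) := by
  simp only [WLop, MLop_fst_eval, MLop_snd_eval]
  rfl

theorem WIop_eq : WIop t nu α a w =
    (weightedMapDomain (· - a) (fun _ => -2 * t ^ a * nu ^ a * α) w.1,
     weightedMapDomain (· - a) (fun _ => t ^ a * nu ^ a * (1 - 2 * α)) w.2) := by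
  simp only [WIop, MIop_fst_eval, MIop_snd_eval]
  rfl

theorem WGop_eq : WGop t nu α a w =
    (weightedMapDomain (· - a)
       (fun k => (-t) ^ a * nu ^ a * (((k - a : ℤ) : ℂ) / 2 + a * α)) w.2,
     weightedMapDomain (· - a) (fun _ => t ^ a * nu ^ a) w.1) := by
  simp only [WGop, MGop_fst_eval, MGop_snd_eval]
  rfl

theorem ALop_eq : ALop σ m w =
    (weightedMapDomain (· + 2 * m) (fun k => -(k : ℂ) / 2 + σ * m) w.1,
     weightedMapDomain (· + 2 * m) (fun k => -(k : ℂ) / 2 + (σ + 1 / 2) * m) w.2) :=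
  rfl

theorem AIop_eq : AIop t σ a w =
    (weightedMapDomain (· + a) (fun _ => -2 * t ^ a * (σ + 1)) w.1,
     weightedMapDomain (· + a) (fun _ => -(t ^ a) * (2 * σ + 1)) w.2) :=
  rfl

theorem AGop_eq : AGop t σ a w =
    (weightedMapDomain (· + a)
       (fun k => (-t) ^ a * (-(k : ℂ) / 2 + (2 * σ + 1) * ((a : ℂ) / 2))) w.2,
     weightedMapDomain (· + a) (fun _ => t ^ a) w.1) :=
  rfl

theorem Phi_eq : Phi nu w =
    (weightedMapDomain Neg.neg (nu ^ ·) w.1, weightedMapDomain Neg.neg (nu ^ ·) w.2) :=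
  rfl

end WeightedShifts

section Intertwining

variable {nu : ℂ} (hnu : nu ≠ 0) (t α : ℂ)
include hnu

theorem Phi_involutive : Function.Involutive (Phi nu) := by
  intro w
  have hcancel (v : ℤ →₀ ℂ) :
      weightedMapDomain Neg.neg (nu ^ ·) (weightedMapDomain Neg.neg (nu ^ ·) v) = v := by
    rw [weightedMapDomain_weightedMapDomain]
    refine (weightedMapDomain_congr (s' := id) (q' := fun _ => 1) (fun _ => neg_neg _)
      (fun j => ?_) v).trans (weightedMapDomain_id_one v)
    rw [← zpow_add₀ hnu, neg_add_cancel, zpow_zero]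
  simp only [Phi_eq, hcancel]

theorem WLop_Phi (m : ℤ) (w : (ℤ →₀ ℂ) × (ℤ →₀ ℂ)) :
    WLop nu α m (Phi nu w) = Phi nu (ALop (α - 1) m w) := by
  simp only [WLop_eq, Phi_eq, ALop_eq, Prod.mk.injEq]
  constructor <;> refine weightedMapDomain_comm (fun _ => by ring) (fun j => ?_) _ <;>
    · rw [zpow_add₀ hnu]; push_cast; ring

theorem WIop_Phi (a : ℤ) (w : (ℤ →₀ ℂ) × (ℤ →₀ ℂ)) :
    WIop t nu α a (Phi nu w) = Phi nu (AIop t (α - 1) a w) := by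
  simp only [WIop_eq, Phi_eq, AIop_eq, Prod.mk.injEq]
  constructor <;> refine weightedMapDomain_comm (fun _ => by ring) (fun j => ?_) _ <;>
    · rw [zpow_add₀ hnu]; ring

theorem WGop_Phi (a : ℤ) (w : (ℤ →₀ ℂ) × (ℤ →₀ ℂ)) :
    WGop t nu α a (Phi nu w) = Phi nu (AGop t (α - 1) a w) := by
  simp only [WGop_eq, Phi_eq, AGop_eq, Prod.mk.injEq]
  constructor <;> refine weightedMapDomain_comm (fun _ => by ring) (fun j => ?_) _ <;>
    · rw [zpow_add₀ hnu]; push_cast; ring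

end Intertwining

theorem stmt19_general (t nu α : ℂ) (hnu : nu ≠ 0) :
    Function.Bijective (Phi nu) ∧
    (∀ (m : ℤ) (w : (ℤ →₀ ℂ) × (ℤ →₀ ℂ)),
        WLop nu α m (Phi nu w) = Phi nu (ALop (α - 1) m w)) ∧
    (∀ a : ℤ, Odd a → ∀ w : (ℤ →₀ ℂ) × (ℤ →₀ ℂ),
        WIop t nu α a (Phi nu w) = Phi nu (AIop t (α - 1) a w)) ∧
    (∀ (a : ℤ) (w : (ℤ →₀ ℂ) × (ℤ →₀ ℂ)),
        WGop t nu α a (Phi nu w) = Phi nu (AGop t (α - 1) a w)) :=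
  ⟨(Phi_involutive hnu).bijective, WLop_Phi hnu α, fun a _ => WIop_Phi hnu t α a,
    WGop_Phi hnu t α⟩

/-- The weighting functor applied to `M_t(λ, α)` gives the intermediate series
module `A_t(α − 1)`: the rescaling map `Phi` is a bijection intertwining the
induced 𝒲-action with the `A_t(α−1)`-action. -/
theorem stmt19 (t nu α : ℂ) (ht : t = 1 ∨ t = -1) (hnu : nu ≠ 0) :
    Function.Bijective (Phi nu) ∧
    (∀ (m : ℤ) (w : (ℤ →₀ ℂ) × (ℤ →₀ ℂ)),
        WLop nu α m (Phi nu w) = Phi nu (ALop (α - 1) m w)) ∧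
    (∀ a : ℤ, Odd a → ∀ w : (ℤ →₀ ℂ) × (ℤ →₀ ℂ),
        WIop t nu α a (Phi nu w) = Phi nu (AIop t (α - 1) a w)) ∧
    (∀ (a : ℤ) (w : (ℤ →₀ ℂ) × (ℤ →₀ ℂ)),
        WGop t nu α a (Phi nu w) = Phi nu (AGop t (α - 1) a w)) :=
  stmt19_general t nu α hnu
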